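/- Let z be a leaf of 𝒯 and let P be the root-to-z path; for each internal vertex v on P, let c_v be the color of the path edge leaving v and n_v ∈ N(v) the child of v on P. Define w := Σ_{v ∈ P ∩ V_in} ( |v^#⟩ + W_{c_v}^{−1/2}·(|v, c_v⟩ − |n_v⟩) ). Then Â w = |z₀⟩ − |z⟩; and if P has at most T edges of which at most G are red, then ‖w‖² ≤ T + 2T/W_b + 2G/W_r. -/

import Mathlib

/-!
Split the witness along the path into one term per path edge `(v, u)`, `v = parent u`:
`e_u = |v^#⟩ + W_{c(u)}^{-1/2} (|v, c(u)⟩ - |u⟩)`. In `Â e_u` the children sum produced by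
`|v, c(u)⟩` cancels the one subtracted by `|v^#⟩`, leaving `|v⟩ - |u⟩`, and over the path these
telescope to `|z₀⟩ - |z⟩`. Since `depth` drops by one along each edge, a path vertex is determined
by its depth, so `parent` is injective on the path and the `e_u` have disjoint supports; hence
`‖w‖²` is `depth z` (the `|v^#⟩` terms) plus `2 / W_c` for each edge of color `c`.
-/

noncomputable section

namespace TreeSpanProgram

variable {V : Type*} [Fintype V] [DecidableEq V]

/-- The children of a vertex `v` in the rooted tree encoded by `root` and `parent`. -/
def children (root : V) (parent : V → V) (v : V) : Finset V :=
  Finset.univ.filter fun u => u ≠ root ∧ parent u = v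

/-- Index of the orthonormal basis of `Ĥ`: a triple `|v, black⟩, |v, red⟩, |v^#⟩` (tags
`0, 1, 2`) for each internal vertex `v`, and a vector `|v⟩` for each vertex `v ∈ V`. -/
abbrev HIdx (VIn : Finset V) := ({v : V // v ∈ VIn} × Fin 3) ⊕ V

/-- The images under `Â` of the orthonormal basis vectors of `Ĥ`:
`Â|v, black⟩ = √W_b Σ_{u ∈ N(v)} |u⟩`, `Â|v, red⟩ = √W_r Σ_{u ∈ N(v)} |u⟩`,
`Â|v^#⟩ = |v⟩ − Σ_{u ∈ N(v)} |u⟩`, `Â|z₀⟩ = 0` and `Â|v⟩ = √W_{c(v)} |v⟩` for `v ≠ z₀`. -/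
def Acol (root : V) (parent : V → V) (color : V → Bool) (VIn : Finset V) (Wb Wr : ℝ) :
    HIdx VIn → EuclideanSpace ℂ V
  | Sum.inl (v, t) =>
      if t = 0 then
        ((Real.sqrt Wb : ℝ) : ℂ) • ∑ u ∈ children root parent v.1, EuclideanSpace.single u 1
      else if t = 1 then
        ((Real.sqrt Wr : ℝ) : ℂ) • ∑ u ∈ children root parent v.1, EuclideanSpace.single u 1
      else
        EuclideanSpace.single v.1 1 - ∑ u ∈ children root parent v.1, EuclideanSpace.single u 1
  | Sum.inr v =>
      if v = root then 0
      else ((Real.sqrt (if color v then Wb else Wr) : ℝ) : ℂ) • EuclideanSpace.single v 1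

/-- The linear map `Â : Ĥ → 𝒱`. -/
def Ahat (root : V) (parent : V → V) (color : V → Bool) (VIn : Finset V) (Wb Wr : ℝ) :
    EuclideanSpace ℂ (HIdx VIn) →ₗ[ℂ] EuclideanSpace ℂ V :=
  (PiLp.basisFun 2 ℂ (HIdx VIn)).constr ℂ (Acol root parent color VIn Wb Wr)

end TreeSpanProgram

namespace TreeSpanProgram

variable {V : Type*} {root : V} {parent : V → V} {depth : V → ℕ}

structure IsDepthFunction (root : V) (parent : V → V) (depth : V → ℕ) : Prop where
  parent_root : parent root = root
  depth_root : depth root = 0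
  depth_parent : ∀ v, v ≠ root → depth (parent v) + 1 = depth v

namespace IsDepthFunction

theorem eq_root_of_depth_eq_zero (h : IsDepthFunction root parent depth) {v : V}
    (hv : depth v = 0) : v = root := by
  by_contra hne
  have := h.depth_parent v hne
  omega

theorem depth_iterate (h : IsDepthFunction root parent depth) (z : V) {k : ℕ}
    (hk : k ≤ depth z) : depth (parent^[k] z) = depth z - k := by
  induction k with
  | zero => rfl
  | succ k ih =>
    have hdk := ih (by omega)
    have hne : parent^[k] z ≠ root := fun hr => by rw [hr, h.depth_root] at hdk; omega
    have := h.depth_parent _ hne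
    rw [Function.iterate_succ_apply']
    omega

theorem iterate_eq_root (h : IsDepthFunction root parent depth) (z : V) {k : ℕ}
    (hk : depth z ≤ k) : parent^[k] z = root := by
  have hroot : parent^[depth z] z = root :=
    h.eq_root_of_depth_eq_zero (by rw [h.depth_iterate z le_rfl, Nat.sub_self])
  obtain ⟨j, rfl⟩ := Nat.exists_eq_add_of_le hk
  rw [add_comm, Function.iterate_add_apply, hroot, Function.iterate_fixed h.parent_root]

variable {z : V} {P : Finset V}

theorem mem_path_iff (h : IsDepthFunction root parent depth)
    (hP : ∀ v, v ∈ P ↔ ∃ k, parent^[k] z = v) {v : V} :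
    v ∈ P ↔ ∃ k ≤ depth z, parent^[k] z = v := by
  refine (hP v).trans ⟨fun ⟨k, hk⟩ => ?_, fun ⟨k, _, hk⟩ => ⟨k, hk⟩⟩
  rcases le_total k (depth z) with hkd | hdk
  · exact ⟨k, hkd, hk⟩
  · exact ⟨depth z, le_rfl, by rw [← hk, h.iterate_eq_root z hdk, h.iterate_eq_root z le_rfl]⟩

theorem depth_le_of_mem_path (h : IsDepthFunction root parent depth)
    (hP : ∀ v, v ∈ P ↔ ∃ k, parent^[k] z = v) {v : V} (hv : v ∈ P) : depth v ≤ depth z := by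
  obtain ⟨k, hk, rfl⟩ := (h.mem_path_iff hP).1 hv
  rw [h.depth_iterate z hk]
  omega

theorem eq_of_mem_path_of_depth_eq (h : IsDepthFunction root parent depth)
    (hP : ∀ v, v ∈ P ↔ ∃ k, parent^[k] z = v) {u v : V} (hu : u ∈ P) (hv : v ∈ P)
    (huv : depth u = depth v) : u = v := by
  obtain ⟨k, hk, rfl⟩ := (h.mem_path_iff hP).1 hu
  obtain ⟨l, hl, rfl⟩ := (h.mem_path_iff hP).1 hv
  rw [h.depth_iterate z hk, h.depth_iterate z hl] at huv
  rw [show k = l by omega]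

theorem root_mem_path (h : IsDepthFunction root parent depth)
    (hP : ∀ v, v ∈ P ↔ ∃ k, parent^[k] z = v) : root ∈ P :=
  (hP root).2 ⟨depth z, h.iterate_eq_root z le_rfl⟩

end IsDepthFunction

theorem mem_path_self {z : V} {P : Finset V} (hP : ∀ v, v ∈ P ↔ ∃ k, parent^[k] z = v) :
    z ∈ P :=
  (hP z).2 ⟨0, rfl⟩

theorem parent_mem_path {z : V} {P : Finset V} (hP : ∀ v, v ∈ P ↔ ∃ k, parent^[k] z = v)
    {v : V} (hv : v ∈ P) : parent v ∈ P := by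
  obtain ⟨k, rfl⟩ := (hP v).1 hv
  exact (hP _).2 ⟨k + 1, Function.iterate_succ_apply' parent k z⟩

namespace IsDepthFunction

variable [DecidableEq V] {z : V} {P : Finset V}

theorem path_eq_image (h : IsDepthFunction root parent depth)
    (hP : ∀ v, v ∈ P ↔ ∃ k, parent^[k] z = v) :
    P = (Finset.range (depth z + 1)).image (parent^[·] z) := by
  ext v
  simp only [h.mem_path_iff hP, Finset.mem_image, Finset.mem_range, Nat.lt_succ_iff]

theorem card_path (h : IsDepthFunction root parent depth)
    (hP : ∀ v, v ∈ P ↔ ∃ k, parent^[k] z = v) : P.card = depth z + 1 := by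
  rw [h.path_eq_image hP, Finset.card_image_of_injOn, Finset.card_range]
  intro a ha b hb hab
  simp only [Finset.coe_range, Set.mem_Iio] at ha hb
  have := h.depth_iterate z (k := a) (by omega)
  rw [show parent^[a] z = parent^[b] z from hab, h.depth_iterate z (by omega)] at this
  omega

theorem card_path_erase (h : IsDepthFunction root parent depth)
    (hP : ∀ v, v ∈ P ↔ ∃ k, parent^[k] z = v) {v : V} (hv : v ∈ P) :
    (P.erase v).card = depth z := by
  rw [Finset.card_erase_of_mem hv, h.card_path hP, Nat.add_sub_cancel]

theorem injOn_parent_path (h : IsDepthFunction root parent depth)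
    (hP : ∀ v, v ∈ P ↔ ∃ k, parent^[k] z = v) : Set.InjOn parent (P.erase root) := by
  intro u hu v hv huv
  rw [Finset.coe_erase, Set.mem_sdiff, Set.mem_singleton_iff] at hu hv
  have hdu := h.depth_parent u hu.2
  have hdv := h.depth_parent v hv.2
  rw [huv] at hdu
  exact h.eq_of_mem_path_of_depth_eq hP hu.1 hv.1 (by omega)

theorem image_parent_path (h : IsDepthFunction root parent depth)
    (hP : ∀ v, v ∈ P ↔ ∃ k, parent^[k] z = v) : (P.erase root).image parent = P.erase z := by
  ext v
  simp only [Finset.mem_image, Finset.mem_erase]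
  constructor
  · rintro ⟨u, ⟨hur, huP⟩, rfl⟩
    have hdu := h.depth_parent u hur
    have := h.depth_le_of_mem_path hP huP
    refine ⟨fun hz => ?_, parent_mem_path hP huP⟩
    rw [hz] at hdu
    omega
  · rintro ⟨hvz, hvP⟩
    obtain ⟨k, hk, rfl⟩ := (h.mem_path_iff hP).1 hvP
    obtain ⟨j, rfl⟩ : ∃ j, k = j + 1 :=
      Nat.exists_eq_succ_of_ne_zero fun hk0 => hvz (by rw [hk0, Function.iterate_zero_apply])
    refine ⟨parent^[j] z, ⟨fun hr => ?_, (hP _).2 ⟨j, rfl⟩⟩, ?_⟩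
    · have := h.depth_iterate z (k := j) (by omega)
      rw [hr, h.depth_root] at this
      omega
    · exact (Function.iterate_succ_apply' parent j z).symm

theorem exists_path_child_iff (h : IsDepthFunction root parent depth)
    (hP : ∀ v, v ∈ P ↔ ∃ k, parent^[k] z = v) {u : V} (hu : u ∈ P.erase root) (q : V → Prop) :
    (∃ u', u' ≠ root ∧ parent u' = parent u ∧ u' ∈ P ∧ q u') ↔ q u := by
  refine ⟨fun ⟨u', hu'r, hpar, hu'P, hq⟩ => ?_, fun hq => ⟨u, Finset.ne_of_mem_erase hu, rfl,
    Finset.mem_of_mem_erase hu, hq⟩⟩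
  rwa [← h.injOn_parent_path hP (Finset.mem_erase.2 ⟨hu'r, hu'P⟩) hu hpar]

theorem inter_path_eq_erase (h : IsDepthFunction root parent depth)
    (hP : ∀ v, v ∈ P ↔ ∃ k, parent^[k] z = v) {VIn : Finset V}
    (hVIn : ∀ v, v ∈ VIn ↔ ∃ u, u ≠ root ∧ parent u = v) (hz : z ∉ VIn) :
    VIn ∩ P = P.erase z := by
  ext v
  rw [Finset.mem_inter]
  constructor
  · rintro ⟨hvIn, hvP⟩
    exact Finset.mem_erase.2 ⟨fun hvz => hz (hvz ▸ hvIn), hvP⟩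
  · intro hv
    obtain ⟨u, hu, rfl⟩ := Finset.mem_image.1 ((h.image_parent_path hP).symm ▸ hv)
    exact ⟨(hVIn _).2 ⟨u, Finset.ne_of_mem_erase hu, rfl⟩,
      parent_mem_path hP (Finset.mem_of_mem_erase hu)⟩

end IsDepthFunction

end TreeSpanProgram

namespace TreeSpanProgram

variable {V : Type*} [Fintype V] [DecidableEq V]

/-- The coordinates of `Σ_{v ∈ P ∩ V_in} (|v^#⟩ + W_{c_v}^{-1/2} (|v, c_v⟩ - |n_v⟩))`, where the
path child `n_v` is the `u ∈ P` with `parent u = v`. -/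
def pathWitness (root : V) (parent : V → V) (color : V → Bool) (VIn : Finset V) (Wb Wr : ℝ)
    (P : Finset V) : EuclideanSpace ℂ (HIdx VIn) :=
  WithLp.toLp 2 fun
    | .inl (v, t) =>
      if t = 0 then
        if ∃ u, u ≠ root ∧ parent u = v.1 ∧ u ∈ P ∧ color u = true then
          (((Real.sqrt Wb)⁻¹ : ℝ) : ℂ) else 0
      else if t = 1 then
        if ∃ u, u ≠ root ∧ parent u = v.1 ∧ u ∈ P ∧ color u = false then
          (((Real.sqrt Wr)⁻¹ : ℝ) : ℂ) else 0
      else if v.1 ∈ P then 1 else 0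
    | .inr u =>
      if u ≠ root ∧ u ∈ P then
        ((-(Real.sqrt (if color u then Wb else Wr))⁻¹ : ℝ) : ℂ) else 0

variable {root : V} {parent : V → V} {color : V → Bool} {VIn : Finset V} {Wb Wr : ℝ}

theorem Ahat_apply (x : EuclideanSpace ℂ (HIdx VIn)) :
    Ahat root parent color VIn Wb Wr x = ∑ i, x i • Acol root parent color VIn Wb Wr i := by
  simp [Ahat, Module.Basis.constr_apply_fintype]

theorem sum_smul_Acol_inl (x : EuclideanSpace ℂ (HIdx VIn)) (v : {v : V // v ∈ VIn}) :
    ∑ t : Fin 3, x (.inl (v, t)) • Acol root parent color VIn Wb Wr (.inl (v, t)) =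
      (x (.inl (v, 0)) * Real.sqrt Wb + x (.inl (v, 1)) * Real.sqrt Wr - x (.inl (v, 2))) •
          ∑ u ∈ children root parent v.1, EuclideanSpace.single u 1 +
        x (.inl (v, 2)) • EuclideanSpace.single v.1 1 := by
  simp only [Fin.sum_univ_three, Acol, Fin.isValue, ↓reduceIte, Complex.coe_smul, one_ne_zero,
    Fin.reduceEq]
  module

variable {depth : V → ℕ} {z : V} {P : Finset V}

/-- Exactly the condition under which the children sums in `Â` cancel on the block of `v`. -/
theorem pathWitness_balance (h : IsDepthFunction root parent depth)
    (hP : ∀ v, v ∈ P ↔ ∃ k, parent^[k] z = v) (hz : z ∉ VIn) (hWb : 0 < Wb) (hWr : 0 < Wr)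
    (v : {v : V // v ∈ VIn}) :
    pathWitness root parent color VIn Wb Wr P (.inl (v, 0)) * Real.sqrt Wb +
        pathWitness root parent color VIn Wb Wr P (.inl (v, 1)) * Real.sqrt Wr =
      pathWitness root parent color VIn Wb Wr P (.inl (v, 2)) := by
  obtain ⟨v, hvIn⟩ := v
  by_cases hvP : v ∈ P
  · obtain ⟨u, hu, hpar⟩ : ∃ u ∈ P.erase root, parent u = v := by
      rw [← Finset.mem_image, h.image_parent_path hP]
      exact Finset.mem_erase.2 ⟨fun hvz => hz (hvz ▸ hvIn), hvP⟩
    subst hpar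
    have hsqb : ((Real.sqrt Wb : ℝ) : ℂ) ≠ 0 := by exact_mod_cast (Real.sqrt_pos.2 hWb).ne'
    have hsqr : ((Real.sqrt Wr : ℝ) : ℂ) ≠ 0 := by exact_mod_cast (Real.sqrt_pos.2 hWr).ne'
    cases hc : color u <;>
      simp [pathWitness, hvP, h.exists_path_child_iff hP hu, hc, hsqb, hsqr]
  · have hno : ∀ q : V → Prop, ¬∃ u, u ≠ root ∧ parent u = v ∧ u ∈ P ∧ q u :=
      fun q ⟨u, _, hpar, huP, _⟩ => hvP (hpar ▸ parent_mem_path hP huP)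
    simp [pathWitness, hvP, hno]

theorem sum_smul_Acol_pathWitness_inl (h : IsDepthFunction root parent depth)
    (hP : ∀ v, v ∈ P ↔ ∃ k, parent^[k] z = v) (hz : z ∉ VIn) (hWb : 0 < Wb) (hWr : 0 < Wr)
    (v : {v : V // v ∈ VIn}) :
    ∑ t : Fin 3, pathWitness root parent color VIn Wb Wr P (.inl (v, t)) •
        Acol root parent color VIn Wb Wr (.inl (v, t)) =
      if v.1 ∈ P then EuclideanSpace.single v.1 1 else 0 := by
  rw [sum_smul_Acol_inl, pathWitness_balance h hP hz hWb hWr v, sub_self, zero_smul, zero_add]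
  by_cases hvP : v.1 ∈ P <;> simp [pathWitness, hvP]

theorem smul_Acol_pathWitness_inr (hWb : 0 < Wb) (hWr : 0 < Wr) (u : V) :
    pathWitness root parent color VIn Wb Wr P (.inr u) • Acol root parent color VIn Wb Wr (.inr u) =
      if u ≠ root ∧ u ∈ P then -EuclideanSpace.single u 1 else 0 := by
  by_cases hu : u ≠ root ∧ u ∈ P
  · have hW : ((Real.sqrt (if color u then Wb else Wr) : ℝ) : ℂ) ≠ 0 := by
      have : 0 < (if color u then Wb else Wr) := by split <;> assumption
      exact_mod_cast (Real.sqrt_pos.2 this).ne'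
    simp only [pathWitness, Acol, PiLp.toLp_apply, if_pos hu, if_neg hu.1, smul_smul,
      Complex.ofReal_neg, Complex.ofReal_inv, neg_mul, inv_mul_cancel₀ hW, neg_smul, one_smul]
  · simp [pathWitness, hu]

theorem Ahat_pathWitness (h : IsDepthFunction root parent depth)
    (hP : ∀ v, v ∈ P ↔ ∃ k, parent^[k] z = v)
    (hVIn : ∀ v, v ∈ VIn ↔ ∃ u, u ≠ root ∧ parent u = v) (hz : z ∉ VIn)
    (hWb : 0 < Wb) (hWr : 0 < Wr) :
    Ahat root parent color VIn Wb Wr (pathWitness root parent color VIn Wb Wr P) =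
      EuclideanSpace.single root 1 - EuclideanSpace.single z 1 := by
  have hpath : Finset.univ.filter (fun u => u ≠ root ∧ u ∈ P) = P.erase root := by
    ext u
    simp
  rw [Ahat_apply, Fintype.sum_sum_type, Fintype.sum_prod_type]
  simp only [sum_smul_Acol_pathWitness_inl h hP hz hWb hWr, smul_Acol_pathWitness_inr hWb hWr]
  rw [Finset.sum_coe_sort VIn (fun v => if v ∈ P then EuclideanSpace.single v (1 : ℂ) else 0),
    Finset.sum_ite_mem, h.inter_path_eq_erase hP hVIn hz, ← Finset.sum_filter, hpath,
    Finset.sum_neg_distrib, Finset.sum_erase_eq_sub (mem_path_self hP),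
    Finset.sum_erase_eq_sub (h.root_mem_path hP)]
  abel

theorem sum_ite_exists_path_child (h : IsDepthFunction root parent depth)
    (hP : ∀ v, v ∈ P ↔ ∃ k, parent^[k] z = v)
    (hVIn : ∀ v, v ∈ VIn ↔ ∃ u, u ≠ root ∧ parent u = v) (q : V → Prop) [DecidablePred q]
    (c : ℝ) :
    ∑ v : {v : V // v ∈ VIn},
        (if ∃ u, u ≠ root ∧ parent u = v.1 ∧ u ∈ P ∧ q u then c else 0) =
      (P.filter fun u => u ≠ root ∧ q u).card * c := by
  have himage : (VIn.filter fun v => ∃ u, u ≠ root ∧ parent u = v ∧ u ∈ P ∧ q u) =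
      (P.filter fun u => u ≠ root ∧ q u).image parent := by
    ext v
    simp only [Finset.mem_filter, Finset.mem_image, hVIn]
    constructor
    · rintro ⟨-, u, hur, hpar, huP, hq⟩
      exact ⟨u, ⟨huP, hur, hq⟩, hpar⟩
    · rintro ⟨u, ⟨huP, hur, hq⟩, rfl⟩
      exact ⟨⟨u, hur, rfl⟩, u, hur, rfl, huP, hq⟩
  have hinj : Set.InjOn parent (P.filter fun u => u ≠ root ∧ q u) :=
    (h.injOn_parent_path hP).mono fun u hu => by
      simp only [Finset.coe_filter, Set.mem_ofPred_eq] at hu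
      exact Finset.mem_erase.2 ⟨hu.2.1, hu.1⟩
  rw [Finset.sum_coe_sort VIn
      (fun v => if ∃ u, u ≠ root ∧ parent u = v ∧ u ∈ P ∧ q u then c else 0),
    ← Finset.sum_filter, Finset.sum_const, nsmul_eq_mul, himage, Finset.card_image_of_injOn hinj]

theorem norm_sq_pathWitness (h : IsDepthFunction root parent depth)
    (hP : ∀ v, v ∈ P ↔ ∃ k, parent^[k] z = v)
    (hVIn : ∀ v, v ∈ VIn ↔ ∃ u, u ≠ root ∧ parent u = v) (hz : z ∉ VIn)
    (hWb : 0 < Wb) (hWr : 0 < Wr) :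
    ‖pathWitness root parent color VIn Wb Wr P‖ ^ 2 =
      depth z + 2 * (P.filter fun u => u ≠ root ∧ color u = true).card / Wb +
        2 * (P.filter fun u => u ≠ root ∧ color u = false).card / Wr := by
  have hinl : ∀ v : {v : V // v ∈ VIn},
      ∑ t : Fin 3, ‖pathWitness root parent color VIn Wb Wr P (.inl (v, t))‖ ^ 2 =
        (if ∃ u, u ≠ root ∧ parent u = v.1 ∧ u ∈ P ∧ color u = true then Wb⁻¹ else 0) +
          (if ∃ u, u ≠ root ∧ parent u = v.1 ∧ u ∈ P ∧ color u = false then Wr⁻¹ else 0) +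
          (if v.1 ∈ P then 1 else 0) := by
    intro v
    simp [Fin.sum_univ_three, pathWitness, apply_ite (‖·‖ ^ 2), Real.sq_sqrt hWb.le,
      Real.sq_sqrt hWr.le]
  have hinr : ∀ u : V, ‖pathWitness root parent color VIn Wb Wr P (.inr u)‖ ^ 2 =
      if u ∈ P then
        (if u ≠ root ∧ color u = true then Wb⁻¹ else 0) +
          (if u ≠ root ∧ color u = false then Wr⁻¹ else 0)
      else 0 := by
    intro u
    by_cases huP : u ∈ P <;> by_cases hur : u = root <;> cases hc : color u <;>
      simp [pathWitness, huP, hur, hc, Real.sq_sqrt hWb.le, Real.sq_sqrt hWr.le]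
  rw [EuclideanSpace.norm_sq_eq, Fintype.sum_sum_type, Fintype.sum_prod_type]
  simp only [hinl, hinr, Finset.sum_ite_mem, Finset.univ_inter, Finset.sum_add_distrib]
  rw [sum_ite_exists_path_child h hP hVIn (color · = true),
    sum_ite_exists_path_child h hP hVIn (color · = false),
    Finset.sum_coe_sort VIn (fun v => if v ∈ P then (1 : ℝ) else 0), Finset.sum_ite_mem,
    h.inter_path_eq_erase hP hVIn hz, ← Finset.sum_filter, ← Finset.sum_filter]
  simp only [Finset.sum_const, nsmul_eq_mul, mul_one, h.card_path_erase hP (mem_path_self hP)]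
  ring

theorem tree_positive_witness_general
    (root : V) (parent : V → V) (color : V → Bool) (depth : V → ℕ)
    (hproot : parent root = root)
    (hdroot : depth root = 0)
    (hdparent : ∀ v, v ≠ root → depth (parent v) + 1 = depth v)
    (VIn : Finset V) (hVIn : ∀ v, v ∈ VIn ↔ ∃ u, u ≠ root ∧ parent u = v)
    (Wb Wr : ℝ) (hWb : 0 < Wb) (hWr : 0 < Wr)
    (z : V) (hz : z ∉ VIn)
    (P : Finset V) (hP : ∀ v, v ∈ P ↔ ∃ k : ℕ, parent^[k] z = v)
    (w : EuclideanSpace ℂ (HIdx VIn))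
    (hw1 : ∀ v : {v : V // v ∈ VIn},
      w (Sum.inl (v, 2)) = if v.1 ∈ P then 1 else 0)
    (hw2 : ∀ v : {v : V // v ∈ VIn},
      w (Sum.inl (v, 0)) =
        if ∃ u, u ≠ root ∧ parent u = v.1 ∧ u ∈ P ∧ color u = true then
          (((Real.sqrt Wb)⁻¹ : ℝ) : ℂ) else 0)
    (hw3 : ∀ v : {v : V // v ∈ VIn},
      w (Sum.inl (v, 1)) =
        if ∃ u, u ≠ root ∧ parent u = v.1 ∧ u ∈ P ∧ color u = false then
          (((Real.sqrt Wr)⁻¹ : ℝ) : ℂ) else 0)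
    (hw4 : ∀ u : V,
      w (Sum.inr u) =
        if u ≠ root ∧ u ∈ P then
          ((-(Real.sqrt (if color u then Wb else Wr))⁻¹ : ℝ) : ℂ) else 0) :
    Ahat root parent color VIn Wb Wr w =
      EuclideanSpace.single root 1 - EuclideanSpace.single z 1 ∧
    ∀ T G : ℝ, (depth z : ℝ) ≤ T →
      ((P.filter (fun v => v ≠ root ∧ color v = false)).card : ℝ) ≤ G →
      ‖w‖ ^ 2 ≤ T + 2 * T / Wb + 2 * G / Wr := by
  have h : IsDepthFunction root parent depth := ⟨hproot, hdroot, hdparent⟩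
  obtain rfl : w = pathWitness root parent color VIn Wb Wr P := by
    ext i
    rcases i with ⟨v, t⟩ | u
    · fin_cases t
      exacts [hw2 v, hw3 v, hw1 v]
    · exact hw4 u
  refine ⟨Ahat_pathWitness h hP hVIn hz hWb hWr, fun T G hT hG => ?_⟩
  have hB : ((P.filter fun u => u ≠ root ∧ color u = true).card : ℝ) ≤ T := by
    refine le_trans ?_ hT
    rw [← h.card_path_erase hP (h.root_mem_path hP)]
    refine Nat.cast_le.2 (Finset.card_le_card fun u hu => ?_)
    obtain ⟨huP, hur, -⟩ := Finset.mem_filter.1 hu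
    exact Finset.mem_erase.2 ⟨hur, huP⟩
  rw [norm_sq_pathWitness h hP hVIn hz hWb hWr]
  gcongr

/-- Positive witness for the span program built from a (generalized) decision tree: for a leaf
`z` with root-to-`z` path `P`, the vector
`w := Σ_{v ∈ P ∩ V_in} (|v^#⟩ + W_{c_v}^{−1/2}(|v, c_v⟩ − |n_v⟩))` — described here by its
coordinates, where `c_v` is the color of the path edge leaving `v` and `n_v` the child of `v`
on `P` — satisfies `Â w = |z₀⟩ − |z⟩`, and `‖w‖² ≤ T + 2T/W_b + 2G/W_r` if `P` has at most
`T` edges of which at most `G` are red. -/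
theorem tree_positive_witness
    (root : V) (parent : V → V) (color : V → Bool) (depth : V → ℕ)
    (hproot : parent root = root)
    (hdroot : depth root = 0)
    (hdparent : ∀ v, v ≠ root → depth (parent v) + 1 = depth v)
    (hblack : ∀ v, (∃ u, u ≠ root ∧ parent u = v) →
      ∃! u, u ≠ root ∧ parent u = v ∧ color u = true)
    (VIn : Finset V) (hVIn : ∀ v, v ∈ VIn ↔ ∃ u, u ≠ root ∧ parent u = v)
    (Wb Wr : ℝ) (hWb : 0 < Wb) (hWr : 0 < Wr)
    (z : V) (hz : z ∉ VIn)
    (P : Finset V) (hP : ∀ v, v ∈ P ↔ ∃ k : ℕ, parent^[k] z = v)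
    (w : EuclideanSpace ℂ (HIdx VIn))
    (hw1 : ∀ v : {v : V // v ∈ VIn},
      w (Sum.inl (v, 2)) = if v.1 ∈ P then 1 else 0)
    (hw2 : ∀ v : {v : V // v ∈ VIn},
      w (Sum.inl (v, 0)) =
        if ∃ u, u ≠ root ∧ parent u = v.1 ∧ u ∈ P ∧ color u = true then
          (((Real.sqrt Wb)⁻¹ : ℝ) : ℂ) else 0)
    (hw3 : ∀ v : {v : V // v ∈ VIn},
      w (Sum.inl (v, 1)) =
        if ∃ u, u ≠ root ∧ parent u = v.1 ∧ u ∈ P ∧ color u = false then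
          (((Real.sqrt Wr)⁻¹ : ℝ) : ℂ) else 0)
    (hw4 : ∀ u : V,
      w (Sum.inr u) =
        if u ≠ root ∧ u ∈ P then
          ((-(Real.sqrt (if color u then Wb else Wr))⁻¹ : ℝ) : ℂ) else 0) :
    Ahat root parent color VIn Wb Wr w =
      EuclideanSpace.single root 1 - EuclideanSpace.single z 1 ∧
    ∀ T G : ℝ, (depth z : ℝ) ≤ T →
      ((P.filter (fun v => v ≠ root ∧ color v = false)).card : ℝ) ≤ G →
      ‖w‖ ^ 2 ≤ T + 2 * T / Wb + 2 * G / Wr :=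
  tree_positive_witness_general root parent color depth hproot hdroot hdparent VIn hVIn Wb Wr hWb
    hWr z hz P hP w hw1 hw2 hw3 hw4

end TreeSpanProgram

end
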